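/- arXiv:1304.5558 — 3 statements merged into one kernel-verified Lean document; each statement's English description precedes it below -/
import Mathlib

section
/- Let ξ₁ and ξ₂ be two distinct real roots of a nonzero polynomial p ∈ ℝ[u]. Then their Thom encodings differ, i.e., there exists k with 1 ≤ k ≤ deg p such that sign(p^{(k)}(ξ₁)) ≠ sign(p^{(k)}(ξ₂)). -/
/-!
If the derivatives `p, p', …, p^(D)` have the same signs at `a < b`, then `p` has constant
sign on `[a, b]`. By induction on the number of derivatives, `p'` already has constant sign
there, so `p` is monotone or antitone on `[a, b]` and its value at any point of `[a, b]` is squeezed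
between `p a` and `p b`, which have the same sign. For two roots the common sign of `p` is `0`,
so `p` would vanish on a whole interval.
-/

open Polynomial Set

namespace Real

theorem sign_nonneg_iff {r : ℝ} : 0 ≤ sign r ↔ 0 ≤ r := by
  rcases lt_trichotomy r 0 with hr | rfl | hr
  · simp [sign_of_neg hr, hr.not_ge]
  · simp
  · simp [sign_of_pos hr, hr.le]

theorem sign_nonpos_iff {r : ℝ} : sign r ≤ 0 ↔ r ≤ 0 := by
  simpa [sign_neg] using sign_nonneg_iff (r := -r)

theorem sign_eq_of_le_of_le {a x b : ℝ} (hax : a ≤ x) (hxb : x ≤ b)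
    (h : sign a = sign b) : sign x = sign a := by
  rcases lt_trichotomy a 0 with ha | rfl | ha
  · rcases lt_trichotomy b 0 with hb | rfl | hb
    · rw [sign_of_neg (hxb.trans_lt hb), sign_of_neg ha]
    · rw [sign_of_neg ha, sign_zero] at h; norm_num at h
    · rw [sign_of_neg ha, sign_of_pos hb] at h; norm_num at h
  · rw [sign_zero, eq_comm, sign_eq_zero_iff] at h
    subst h
    rw [le_antisymm hxb hax]
  · rw [sign_of_pos ha, sign_of_pos (ha.trans_le hax)]

end Real

namespace Polynomial

theorem monotoneOn_or_antitoneOn_of_sign_derivative_eq {q : ℝ[X]} {a b : ℝ}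
    (h : ∀ x ∈ Icc a b, Real.sign ((derivative q).eval x) = Real.sign ((derivative q).eval a)) :
    MonotoneOn (fun x ↦ q.eval x) (Icc a b) ∨ AntitoneOn (fun x ↦ q.eval x) (Icc a b) := by
  have hcont := q.continuous.continuousOn (s := Icc a b)
  have hdiff := q.differentiable.differentiableOn (s := interior (Icc a b))
  rcases le_total 0 ((derivative q).eval a) with hpos | hneg
  · refine .inl <| monotoneOn_of_deriv_nonneg (convex_Icc a b) hcont hdiff fun y hy ↦ ?_
    rw [Polynomial.deriv, ← Real.sign_nonneg_iff, h y (interior_subset hy)]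
    exact Real.sign_nonneg_iff.2 hpos
  · refine .inr <| antitoneOn_of_deriv_nonpos (convex_Icc a b) hcont hdiff fun y hy ↦ ?_
    rw [Polynomial.deriv, ← Real.sign_nonpos_iff, h y (interior_subset hy)]
    exact Real.sign_nonpos_iff.2 hneg

theorem sign_eval_eq_of_sign_iterate_derivative_eq {q : ℝ[X]} {a b : ℝ}
    (hsign : ∀ k, Real.sign ((derivative^[k] q).eval a) =
      Real.sign ((derivative^[k] q).eval b)) :
    ∀ x ∈ Icc a b, Real.sign (q.eval x) = Real.sign (q.eval a) := by
  obtain ⟨n, hn⟩ : ∃ n, derivative^[n] q = 0 :=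
    ⟨_, iterate_derivative_eq_zero q.natDegree.lt_succ_self⟩
  induction n generalizing q with
  | zero => simp_all
  | succ n ih =>
    have hderiv := ih (q := derivative q)
      (fun k ↦ by simpa only [← Function.iterate_succ_apply] using hsign (k + 1))
      (by rwa [← Function.iterate_succ_apply])
    have h0 : Real.sign (q.eval a) = Real.sign (q.eval b) := hsign 0
    intro x hx
    have ha : a ∈ Icc a b := left_mem_Icc.2 (hx.1.trans hx.2)
    have hb : b ∈ Icc a b := right_mem_Icc.2 (hx.1.trans hx.2)
    rcases monotoneOn_or_antitoneOn_of_sign_derivative_eq hderiv with hmono | hanti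
    · exact Real.sign_eq_of_le_of_le (hmono ha hx hx.1) (hmono hx hb hx.2) h0
    · exact (Real.sign_eq_of_le_of_le (hanti hx hb hx.2) (hanti ha hx hx.1) h0.symm).trans h0.symm

theorem eq_zero_of_eval_eq_zero_of_sign_iterate_derivative_eq {q : ℝ[X]} {a b : ℝ} (hab : a < b)
    (ha : q.eval a = 0) (hsign : ∀ k, Real.sign ((derivative^[k] q).eval a) =
      Real.sign ((derivative^[k] q).eval b)) :
    q = 0 := by
  refine q.eq_zero_of_infinite_isRoot ((Icc_infinite hab).mono fun x hx ↦ ?_)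
  have := sign_eval_eq_of_sign_iterate_derivative_eq hsign x hx
  rwa [ha, Real.sign_zero, Real.sign_eq_zero_iff] at this

end Polynomial

/-- Two distinct real roots of a nonzero real polynomial have different Thom
encodings: there is a `k` with `1 ≤ k ≤ deg p` at which the signs of the `k`-th
derivatives differ. -/
theorem thom_encodings_differ (p : Polynomial ℝ) (hp : p ≠ 0)
    (ξ₁ ξ₂ : ℝ) (hξ : ξ₁ ≠ ξ₂) (h₁ : p.eval ξ₁ = 0) (h₂ : p.eval ξ₂ = 0) :
    ∃ k, 1 ≤ k ∧ k ≤ p.natDegree ∧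
      Real.sign ((Polynomial.derivative^[k] p).eval ξ₁) ≠
      Real.sign ((Polynomial.derivative^[k] p).eval ξ₂) := by
  by_contra! hcon
  have hsign : ∀ k, Real.sign ((derivative^[k] p).eval ξ₁) =
      Real.sign ((derivative^[k] p).eval ξ₂) := by
    intro k
    rcases Nat.eq_zero_or_pos k with rfl | hk
    · simp [h₁, h₂]
    rcases le_or_gt k p.natDegree with hkd | hkd
    · exact hcon k hk hkd
    · simp [iterate_derivative_eq_zero hkd]
  rcases hξ.lt_or_gt with hlt | hgt
  · exact hp (eq_zero_of_eval_eq_zero_of_sign_iterate_derivative_eq hlt h₁ hsign)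
  · exact hp (eq_zero_of_eval_eq_zero_of_sign_iterate_derivative_eq hgt h₂ fun k ↦ (hsign k).symm)
end

section
/- Let p ∈ ℝ[u] be a nonzero polynomial and ξ₁, ξ₂ distinct real roots of p with Thom encodings (σ_{1,1},...,σ_{1,D}) and (σ_{2,1},...,σ_{2,D}) where D = deg p. Let k be the largest index with σ_{1,k} ≠ σ_{2,k}. Then k < D and σ_{1,k+1} = σ_{2,k+1} ≠ 0. -/
open Polynomial Set

private lemma sign_eq_one_iff' {r : ℝ} : Real.sign r = 1 ↔ 0 < r := by
  constructor
  · intro h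
    rcases lt_trichotomy r 0 with h' | rfl | h'
    · rw [Real.sign_of_neg h'] at h; norm_num at h
    · simp at h
    · exact h'
  · exact Real.sign_of_pos

private lemma sign_eq_neg_one_iff' {r : ℝ} : Real.sign r = -1 ↔ r < 0 := by
  constructor
  · intro h
    rcases lt_trichotomy r 0 with h' | rfl | h'
    · exact h'
    · simp at h
    · rw [Real.sign_of_pos h'] at h; norm_num at h
  · exact Real.sign_of_neg

/-- If the derivative of `q` has constant sign on `[a,b]` and `q` has equal signs at the
endpoints, then `q` has that constant sign on all of `[a,b]`. -/
private lemma thom_step (q : Polynomial ℝ) {a b : ℝ} (hab : a < b)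
    (hder : ∀ x ∈ Icc a b,
      Real.sign (q.derivative.eval x) = Real.sign (q.derivative.eval a))
    (hend : Real.sign (q.eval a) = Real.sign (q.eval b)) :
    ∀ x ∈ Icc a b, Real.sign (q.eval x) = Real.sign (q.eval a) := by
  have hc : ContinuousOn (fun x => q.eval x) (Icc a b) := (q.continuous).continuousOn
  rcases lt_trichotomy (q.derivative.eval a) 0 with hs | hs | hs
  · -- derivative negative on Icc : q strictly antitone
    have hneg : ∀ x ∈ Icc a b, q.derivative.eval x < 0 := fun x hx =>
      sign_eq_neg_one_iff'.mp ((hder x hx).trans (Real.sign_of_neg hs))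
    have hanti : StrictAntiOn (fun x => q.eval x) (Icc a b) :=
      strictAntiOn_of_deriv_neg (convex_Icc a b) hc (fun x hx => by
        rw [Polynomial.deriv]; exact hneg x (interior_subset hx))
    intro x hx
    rcases lt_trichotomy (q.eval a) 0 with ha | ha | ha
    · have hle : q.eval x ≤ q.eval a := by
        rcases eq_or_lt_of_le hx.1 with h | h
        · rw [← h]
        · exact (hanti (left_mem_Icc.mpr hab.le) hx h).le
      rw [Real.sign_of_neg (lt_of_le_of_lt hle ha), Real.sign_of_neg ha]
    · exfalso
      have hb0 : q.eval b = 0 := by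
        have h := hend.symm
        rw [ha, Real.sign_zero] at h
        exact Real.sign_eq_zero_iff.mp h
      have h := hanti (left_mem_Icc.mpr hab.le) (right_mem_Icc.mpr hab.le) hab
      simp only [ha, hb0] at h
      exact lt_irrefl 0 h
    · have hb : 0 < q.eval b := sign_eq_one_iff'.mp (hend.symm.trans (Real.sign_of_pos ha))
      have hle : q.eval b ≤ q.eval x := by
        rcases eq_or_lt_of_le hx.2 with h | h
        · rw [h]
        · exact (hanti hx (right_mem_Icc.mpr hab.le) h).le
      rw [Real.sign_of_pos (lt_of_lt_of_le hb hle), Real.sign_of_pos ha]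
  · -- derivative vanishes on Icc : q is constant
    have hz : ∀ x ∈ Icc a b, q.derivative.eval x = 0 := fun x hx =>
      Real.sign_eq_zero_iff.mp ((hder x hx).trans (by rw [hs, Real.sign_zero]))
    have hd0 : q.derivative = 0 :=
      Polynomial.eq_zero_of_infinite_isRoot _ ((Set.Icc_infinite hab).mono hz)
    have hq : q = Polynomial.C (q.coeff 0) :=
      Polynomial.eq_C_of_natDegree_eq_zero
        (Polynomial.natDegree_eq_zero_of_derivative_eq_zero hd0)
    intro x hx
    rw [hq]; simp
  · -- derivative positive on Icc : q strictly monotone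
    have hpos : ∀ x ∈ Icc a b, 0 < q.derivative.eval x := fun x hx =>
      sign_eq_one_iff'.mp ((hder x hx).trans (Real.sign_of_pos hs))
    have hmono : StrictMonoOn (fun x => q.eval x) (Icc a b) :=
      strictMonoOn_of_deriv_pos (convex_Icc a b) hc (fun x hx => by
        rw [Polynomial.deriv]; exact hpos x (interior_subset hx))
    intro x hx
    rcases lt_trichotomy (q.eval a) 0 with ha | ha | ha
    · have hb : q.eval b < 0 := sign_eq_neg_one_iff'.mp (hend.symm.trans (Real.sign_of_neg ha))
      have hle : q.eval x ≤ q.eval b := by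
        rcases eq_or_lt_of_le hx.2 with h | h
        · rw [h]
        · exact (hmono hx (right_mem_Icc.mpr hab.le) h).le
      rw [Real.sign_of_neg (lt_of_le_of_lt hle hb), Real.sign_of_neg ha]
    · exfalso
      have hb0 : q.eval b = 0 := by
        have h := hend.symm
        rw [ha, Real.sign_zero] at h
        exact Real.sign_eq_zero_iff.mp h
      have h := hmono (left_mem_Icc.mpr hab.le) (right_mem_Icc.mpr hab.le) hab
      simp only [ha, hb0] at h
      exact lt_irrefl 0 h
    · have hle : q.eval a ≤ q.eval x := by
        rcases eq_or_lt_of_le hx.1 with h | h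
        · rw [← h]
        · exact (hmono (left_mem_Icc.mpr hab.le) hx h).le
      rw [Real.sign_of_pos (lt_of_lt_of_le ha hle), Real.sign_of_pos ha]

/-- Thom's lemma argument: if the iterated derivatives of `p` from level `m` up to
`natDegree p` have equal signs at `a` and `b`, then the `m`-th iterated derivative of `p`
has constant sign on `[a,b]`. -/
private lemma thom_const_sign (p : Polynomial ℝ) {a b : ℝ} (hab : a < b) (m : ℕ)
    (hm : m ≤ p.natDegree)
    (hsame : ∀ j, m ≤ j → j ≤ p.natDegree →
      Real.sign ((Polynomial.derivative^[j] p).eval a) =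
        Real.sign ((Polynomial.derivative^[j] p).eval b)) :
    ∀ x ∈ Icc a b,
      Real.sign ((Polynomial.derivative^[m] p).eval x) =
        Real.sign ((Polynomial.derivative^[m] p).eval a) := by
  refine Nat.decreasingInduction' (n := p.natDegree) (m := m)
    (P := fun i => (∀ j, i ≤ j → j ≤ p.natDegree →
        Real.sign ((Polynomial.derivative^[j] p).eval a) =
          Real.sign ((Polynomial.derivative^[j] p).eval b)) →
      ∀ x ∈ Icc a b,
        Real.sign ((Polynomial.derivative^[i] p).eval x) =
          Real.sign ((Polynomial.derivative^[i] p).eval a))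
    ?_ hm ?_ hsame
  · intro j hjD hmj ih hsame'
    refine thom_step (Polynomial.derivative^[j] p) hab ?_ (hsame' j le_rfl hjD.le)
    intro x hx
    rw [← Function.iterate_succ_apply' Polynomial.derivative j p]
    exact ih (fun j' hj' hj'D => hsame' j' (le_trans (Nat.le_succ _) hj') hj'D) x hx
  · intro _
    have hdeg : (Polynomial.derivative^[p.natDegree] p).natDegree = 0 := by
      have := Polynomial.natDegree_iterate_derivative p p.natDegree
      omega
    have hC : Polynomial.derivative^[p.natDegree] p =
        Polynomial.C ((Polynomial.derivative^[p.natDegree] p).coeff 0) :=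
      Polynomial.eq_C_of_natDegree_eq_zero hdeg
    intro x hx
    rw [hC]; simp

/-- If `k` is the largest index at which the Thom encodings of two distinct real
roots `ξ₁ ≠ ξ₂` of a nonzero polynomial `p` differ, then `k < deg p` and the
(common) sign of the `(k+1)`-st derivative at the two roots is nonzero. -/
theorem thom_largest_differing_index (p : Polynomial ℝ) (hp : p ≠ 0)
    (ξ₁ ξ₂ : ℝ) (hξ : ξ₁ ≠ ξ₂) (h₁ : p.eval ξ₁ = 0) (h₂ : p.eval ξ₂ = 0)
    (σ₁ σ₂ : ℕ → ℝ)
    (hσ₁ : ∀ j, σ₁ j = Real.sign ((Polynomial.derivative^[j] p).eval ξ₁))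
    (hσ₂ : ∀ j, σ₂ j = Real.sign ((Polynomial.derivative^[j] p).eval ξ₂))
    (k : ℕ) (hk1 : 1 ≤ k) (hkD : k ≤ p.natDegree)
    (hdiff : σ₁ k ≠ σ₂ k)
    (hlargest : ∀ j, k < j → j ≤ p.natDegree → σ₁ j = σ₂ j) :
    k < p.natDegree ∧ σ₁ (k + 1) = σ₂ (k + 1) ∧ σ₁ (k + 1) ≠ 0 := by
  set D := p.natDegree with hD
  -- the D-th iterated derivative is a nonzero constant
  have hdeg : (Polynomial.derivative^[D] p).natDegree = 0 := by
    have := Polynomial.natDegree_iterate_derivative p D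
    omega
  have hC : Polynomial.derivative^[D] p =
      Polynomial.C ((Polynomial.derivative^[D] p).coeff 0) :=
    Polynomial.eq_C_of_natDegree_eq_zero hdeg
  have hc0 : (Polynomial.derivative^[D] p).coeff 0 ≠ 0 := by
    rw [Polynomial.coeff_iterate_derivative]
    simp only [zero_add]
    have hlc : p.coeff D ≠ 0 := by
      rw [hD, ← Polynomial.leadingCoeff]
      exact Polynomial.leadingCoeff_ne_zero.mpr hp
    have hdesc : D.descFactorial D ≠ 0 := by
      rw [Nat.descFactorial_self]
      exact Nat.factorial_ne_zero D
    simp only [nsmul_eq_mul]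
    exact mul_ne_zero (Nat.cast_ne_zero.mpr hdesc) hlc
  -- the Thom encodings agree at level D, with nonzero value
  have hσD : σ₁ D = σ₂ D := by
    rw [hσ₁, hσ₂, hC]
    simp
  -- hence k < D
  have hklt : k < D := lt_of_le_of_ne hkD (fun h => hdiff (h ▸ hσD))
  refine ⟨hklt, hlargest (k + 1) (Nat.lt_succ_self k) hklt, ?_⟩
  -- main part: the common sign at level k+1 is nonzero
  intro hzero
  -- key claim, symmetric in the two roots
  have key : ∀ a b : ℝ, a < b →
      (∀ j, k + 1 ≤ j → j ≤ D →
        Real.sign ((Polynomial.derivative^[j] p).eval a) =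
          Real.sign ((Polynomial.derivative^[j] p).eval b)) →
      (Polynomial.derivative^[k + 1] p).eval a = 0 →
      (Polynomial.derivative^[k] p).eval a = (Polynomial.derivative^[k] p).eval b := by
    intro a b hab hsame ha0
    have hconst := thom_const_sign p hab (k + 1) hklt hsame
    have hz : ∀ x ∈ Icc a b, (Polynomial.derivative^[k + 1] p).eval x = 0 := by
      intro x hx
      have := (hconst x hx).trans (by rw [ha0, Real.sign_zero])
      exact Real.sign_eq_zero_iff.mp this
    have hd0 : Polynomial.derivative (Polynomial.derivative^[k] p) = 0 := by
      rw [Function.iterate_succ_apply' Polynomial.derivative k p] at hz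
      exact Polynomial.eq_zero_of_infinite_isRoot _ ((Set.Icc_infinite hab).mono hz)
    have hq : Polynomial.derivative^[k] p =
        Polynomial.C ((Polynomial.derivative^[k] p).coeff 0) :=
      Polynomial.eq_C_of_natDegree_eq_zero
        (Polynomial.natDegree_eq_zero_of_derivative_eq_zero hd0)
    rw [hq]; simp
  rcases hξ.lt_or_gt with hlt | hlt
  · have hsame : ∀ j, k + 1 ≤ j → j ≤ D →
        Real.sign ((Polynomial.derivative^[j] p).eval ξ₁) =
          Real.sign ((Polynomial.derivative^[j] p).eval ξ₂) := by
      intro j hj hjD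
      rw [← hσ₁, ← hσ₂]
      exact hlargest j (lt_of_lt_of_le (Nat.lt_succ_self k) hj) hjD
    have ha0 : (Polynomial.derivative^[k + 1] p).eval ξ₁ = 0 := by
      have := hσ₁ (k + 1)
      rw [hzero] at this
      exact Real.sign_eq_zero_iff.mp this.symm
    have := key ξ₁ ξ₂ hlt hsame ha0
    exact hdiff (by rw [hσ₁, hσ₂, this])
  · have hsame : ∀ j, k + 1 ≤ j → j ≤ D →
        Real.sign ((Polynomial.derivative^[j] p).eval ξ₂) =
          Real.sign ((Polynomial.derivative^[j] p).eval ξ₁) := by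
      intro j hj hjD
      rw [← hσ₁, ← hσ₂]
      exact (hlargest j (lt_of_lt_of_le (Nat.lt_succ_self k) hj) hjD).symm
    have ha0 : (Polynomial.derivative^[k + 1] p).eval ξ₂ = 0 := by
      have := hσ₂ (k + 1)
      rw [← hlargest (k + 1) (Nat.lt_succ_self k) hklt, hzero] at this
      exact Real.sign_eq_zero_iff.mp this.symm
    have := key ξ₂ ξ₁ hlt hsame ha0
    exact hdiff (by rw [hσ₁, hσ₂, this])
end

section
/- Let p ∈ ℝ[u] be nonzero with distinct real roots ξ₁, ξ₂, Thom encodings σ₁, σ₂, and k the largest index where they differ. If σ_{1,k+1} = σ_{2,k+1} = 1, then ξ₁ < ξ₂ if and only if σ_{1,k} < σ_{2,k}; if σ_{1,k+1} = σ_{2,k+1} = -1, then ξ₁ < ξ₂ if and only if σ_{1,k} > σ_{2,k}. -/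
private lemma real_sign_mono {x y : ℝ} (h : x ≤ y) : Real.sign x ≤ Real.sign y := by
  rcases lt_trichotomy x 0 with hx|hx|hx
  · rw [Real.sign_of_neg hx]
    rcases lt_trichotomy y 0 with hy|hy|hy
    · rw [Real.sign_of_neg hy]
    · rw [hy, Real.sign_zero]; norm_num
    · rw [Real.sign_of_pos hy]; norm_num
  · subst hx
    rw [Real.sign_zero]
    rcases eq_or_lt_of_le h with hy|hy
    · rw [← hy, Real.sign_zero]
    · rw [Real.sign_of_pos hy]; norm_num
  · rw [Real.sign_of_pos hx, Real.sign_of_pos (hx.trans_le h)]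

private lemma pos_of_sign_eq_one {x : ℝ} (h : Real.sign x = 1) : 0 < x := by
  rcases lt_trichotomy x 0 with hx|hx|hx
  · rw [Real.sign_of_neg hx] at h; norm_num at h
  · rw [hx, Real.sign_zero] at h; norm_num at h
  · exact hx

private lemma lt_zero_of_sign_eq_neg_one {x : ℝ} (h : Real.sign x = -1) : x < 0 := by
  rcases lt_trichotomy x 0 with hx|hx|hx
  · exact hx
  · rw [hx, Real.sign_zero] at h; norm_num at h
  · rw [Real.sign_of_pos hx] at h; norm_num at h

private lemma sign_const_of_strictMonoOn {f : ℝ → ℝ} {a b : ℝ} (hab : a < b)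
    (hf : StrictMonoOn f (Set.Icc a b))
    (hs : Real.sign (f a) = Real.sign (f b)) :
    ∀ x ∈ Set.Icc a b, Real.sign (f x) = Real.sign (f a) := by
  intro x hx
  have ha : a ∈ Set.Icc a b := Set.left_mem_Icc.2 hab.le
  have hb : b ∈ Set.Icc a b := Set.right_mem_Icc.2 hab.le
  rcases lt_trichotomy (f a) 0 with h0|h0|h0
  · have hfb : f b < 0 := by
      by_contra hcon
      push_neg at hcon
      rcases eq_or_lt_of_le hcon with h|h
      · rw [Real.sign_of_neg h0, ← h, Real.sign_zero] at hs; norm_num at hs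
      · rw [Real.sign_of_neg h0, Real.sign_of_pos h] at hs; norm_num at hs
    have hle : f x ≤ f b := hf.monotoneOn hx hb hx.2
    rw [Real.sign_of_neg h0, Real.sign_of_neg (lt_of_le_of_lt hle hfb)]
  · exfalso
    have h1 : f a < f b := hf ha hb hab
    rw [h0, Real.sign_zero] at hs
    have := Real.sign_eq_zero_iff.1 hs.symm
    linarith
  · have hle : f a ≤ f x := hf.monotoneOn ha hx hx.1
    rw [Real.sign_of_pos h0, Real.sign_of_pos (lt_of_lt_of_le h0 hle)]

/-- Comparing two distinct real roots of `p` via their Thom encodings: with `k`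
the largest differing index, if the common sign at `k+1` is `1` then
`ξ₁ < ξ₂ ↔ σ₁ k < σ₂ k`, and if it is `-1` then `ξ₁ < ξ₂ ↔ σ₁ k > σ₂ k`. -/
theorem thom_encoding_comparison (p : Polynomial ℝ) (hp : p ≠ 0)
    (ξ₁ ξ₂ : ℝ) (hξ : ξ₁ ≠ ξ₂) (h₁ : p.eval ξ₁ = 0) (h₂ : p.eval ξ₂ = 0)
    (σ₁ σ₂ : ℕ → ℝ)
    (hσ₁ : ∀ j, σ₁ j = Real.sign ((Polynomial.derivative^[j] p).eval ξ₁))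
    (hσ₂ : ∀ j, σ₂ j = Real.sign ((Polynomial.derivative^[j] p).eval ξ₂))
    (k : ℕ) (hk1 : 1 ≤ k) (hkD : k < p.natDegree)
    (hdiff : σ₁ k ≠ σ₂ k)
    (hlargest : ∀ j, k < j → j ≤ p.natDegree → σ₁ j = σ₂ j) :
    (σ₁ (k + 1) = 1 → σ₂ (k + 1) = 1 → (ξ₁ < ξ₂ ↔ σ₁ k < σ₂ k)) ∧
    (σ₁ (k + 1) = -1 → σ₂ (k + 1) = -1 → (ξ₁ < ξ₂ ↔ σ₂ k < σ₁ k)) := by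
  set D := p.natDegree with hDdef
  set a := min ξ₁ ξ₂ with hadef
  set b := max ξ₁ ξ₂ with hbdef
  have hab : a < b := min_lt_max.mpr hξ
  have hmem₁ : ξ₁ ∈ Set.Icc a b := ⟨min_le_left _ _, le_max_left _ _⟩
  have hmem₂ : ξ₂ ∈ Set.Icc a b := ⟨min_le_right _ _, le_max_right _ _⟩
  -- the encodings agree at all indices above `k`
  have hσeq : ∀ j, k < j → σ₁ j = σ₂ j := by
    intro j hj
    rcases le_or_gt j D with h|h
    · exact hlargest j hj h
    · rw [hσ₁, hσ₂, Polynomial.iterate_derivative_eq_zero h]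
      simp
  -- signs at the endpoints of the interval, for indices above `k`
  have hsa : ∀ j, k < j → Real.sign ((Polynomial.derivative^[j] p).eval a) = σ₁ j := by
    intro j hj
    rcases le_total ξ₁ ξ₂ with h|h
    · rw [hadef, min_eq_left h, ← hσ₁ j]
    · rw [hadef, min_eq_right h, ← hσ₂ j, hσeq j hj]
  have hsb : ∀ j, k < j → Real.sign ((Polynomial.derivative^[j] p).eval b) = σ₁ j := by
    intro j hj
    rcases le_total ξ₁ ξ₂ with h|h
    · rw [hbdef, max_eq_right h, ← hσ₂ j, hσeq j hj]
    · rw [hbdef, max_eq_left h, ← hσ₁ j]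
  -- key downward induction: all derivatives of index `> k` have constant sign on `[a,b]`
  have key : ∀ n : ℕ, k + 1 ≤ D + 1 - n → ∀ x ∈ Set.Icc a b,
      Real.sign ((Polynomial.derivative^[D + 1 - n] p).eval x) = σ₁ (D + 1 - n) := by
    intro n
    induction n with
    | zero =>
      intro _ x _
      simp only [Nat.sub_zero]
      rw [hσ₁, Polynomial.iterate_derivative_eq_zero (Nat.lt_succ_self D)]
      simp
    | succ n ih =>
      intro hn x hx
      have hmk : k + 1 ≤ D - n := by omega
      set m := D - n with hmdef
      have hrw : D + 1 - (n + 1) = m := by omega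
      have hms : m + 1 = D + 1 - n := by omega
      rw [hrw]
      have ih2 : ∀ y ∈ Set.Icc a b,
          Real.sign ((Polynomial.derivative^[m + 1] p).eval y) = σ₁ (m + 1) := by
        rw [hms]; exact ih (by omega)
      rcases lt_trichotomy ((Polynomial.derivative^[m + 1] p).eval ξ₁) 0 with hc|hc|hc
      · -- derivative of order m+1 is negative throughout
        have hsgn : σ₁ (m + 1) = -1 := by rw [hσ₁ (m + 1), Real.sign_of_neg hc]
        have hneg : ∀ y ∈ Set.Icc a b, ((Polynomial.derivative^[m + 1] p).eval y) < 0 :=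
          fun y hy => lt_zero_of_sign_eq_neg_one (by rw [ih2 y hy, hsgn])
        have hanti : StrictAntiOn (fun y => (Polynomial.derivative^[m] p).eval y)
            (Set.Icc a b) := by
          apply strictAntiOn_of_deriv_neg (convex_Icc a b) (Polynomial.continuousOn _)
          intro y hy
          rw [Polynomial.deriv, ← Function.iterate_succ_apply' (⇑Polynomial.derivative) _ p]
          exact hneg y (interior_subset hy)
        have hmono : StrictMonoOn (fun y => -((Polynomial.derivative^[m] p).eval y))
            (Set.Icc a b) := fun u hu v hv huv => neg_lt_neg (hanti hu hv huv)
        have hends : Real.sign (-((Polynomial.derivative^[m] p).eval a)) =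
            Real.sign (-((Polynomial.derivative^[m] p).eval b)) := by
          rw [Real.sign_neg, Real.sign_neg, hsa m (by omega), hsb m (by omega)]
        have hthis := sign_const_of_strictMonoOn hab hmono hends x hx
        simp only [Real.sign_neg] at hthis
        have hA : Real.sign ((Polynomial.derivative^[m] p).eval a) = σ₁ m := hsa m (by omega)
        rw [hA] at hthis
        linarith
      · -- derivative of order m+1 vanishes identically
        have hzero : ∀ y ∈ Set.Icc a b, ((Polynomial.derivative^[m + 1] p).eval y) = 0 :=
          fun y hy => Real.sign_eq_zero_iff.1
            (by rw [ih2 y hy, hσ₁ (m + 1), hc, Real.sign_zero])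
        have hpoly : Polynomial.derivative^[m + 1] p = 0 := by
          apply Polynomial.eq_zero_of_infinite_isRoot
          exact (Set.Icc_infinite hab).mono (fun y hy => hzero y hy)
        have hC : Polynomial.derivative^[m] p =
            Polynomial.C ((Polynomial.derivative^[m] p).coeff 0) := by
          apply Polynomial.eq_C_of_derivative_eq_zero
          rw [← Function.iterate_succ_apply' (⇑Polynomial.derivative) m p]
          exact hpoly
        rw [hσ₁ m, hC]
        simp
      · -- derivative of order m+1 is positive throughout
        have hsgn : σ₁ (m + 1) = 1 := by rw [hσ₁ (m + 1), Real.sign_of_pos hc]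
        have hpos : ∀ y ∈ Set.Icc a b, 0 < ((Polynomial.derivative^[m + 1] p).eval y) :=
          fun y hy => pos_of_sign_eq_one (by rw [ih2 y hy, hsgn])
        have hmono : StrictMonoOn (fun y => (Polynomial.derivative^[m] p).eval y)
            (Set.Icc a b) := by
          apply strictMonoOn_of_deriv_pos (convex_Icc a b) (Polynomial.continuousOn _)
          intro y hy
          rw [Polynomial.deriv, ← Function.iterate_succ_apply' (⇑Polynomial.derivative) _ p]
          exact hpos y (interior_subset hy)
        have hends : Real.sign ((Polynomial.derivative^[m] p).eval a) =
            Real.sign ((Polynomial.derivative^[m] p).eval b) := by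
          rw [hsa m (by omega), hsb m (by omega)]
        have hthis := sign_const_of_strictMonoOn hab hmono hends x hx
        rw [hsa m (by omega)] at hthis
        exact hthis
  have keyk : ∀ x ∈ Set.Icc a b,
      Real.sign ((Polynomial.derivative^[k + 1] p).eval x) = σ₁ (k + 1) := by
    have h1 : k + 1 = D + 1 - (D - k) := by omega
    rw [h1]
    exact key (D - k) (by omega)
  constructor
  · -- positive case
    intro hs1 _
    have hpos : ∀ y ∈ Set.Icc a b, 0 < ((Polynomial.derivative^[k + 1] p).eval y) :=
      fun y hy => pos_of_sign_eq_one (by rw [keyk y hy, hs1])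
    have hmono : StrictMonoOn (fun y => (Polynomial.derivative^[k] p).eval y)
        (Set.Icc a b) := by
      apply strictMonoOn_of_deriv_pos (convex_Icc a b) (Polynomial.continuousOn _)
      intro y hy
      rw [Polynomial.deriv, ← Function.iterate_succ_apply' (⇑Polynomial.derivative) _ p]
      exact hpos y (interior_subset hy)
    constructor
    · intro hlt
      have h := hmono hmem₁ hmem₂ hlt
      have hle := real_sign_mono h.le
      rw [← hσ₁ k, ← hσ₂ k] at hle
      exact lt_of_le_of_ne hle hdiff
    · intro hlt
      rcases hξ.lt_or_gt with h|h
      · exact h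
      · exfalso
        have h' := hmono hmem₂ hmem₁ h
        have hle := real_sign_mono h'.le
        rw [← hσ₁ k, ← hσ₂ k] at hle
        linarith
  · -- negative case
    intro hs1 _
    have hneg : ∀ y ∈ Set.Icc a b, ((Polynomial.derivative^[k + 1] p).eval y) < 0 :=
      fun y hy => lt_zero_of_sign_eq_neg_one (by rw [keyk y hy, hs1])
    have hanti : StrictAntiOn (fun y => (Polynomial.derivative^[k] p).eval y)
        (Set.Icc a b) := by
      apply strictAntiOn_of_deriv_neg (convex_Icc a b) (Polynomial.continuousOn _)
      intro y hy
      rw [Polynomial.deriv, ← Function.iterate_succ_apply' (⇑Polynomial.derivative) _ p]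
      exact hneg y (interior_subset hy)
    constructor
    · intro hlt
      have h := hanti hmem₁ hmem₂ hlt
      have hle := real_sign_mono h.le
      rw [← hσ₁ k, ← hσ₂ k] at hle
      exact lt_of_le_of_ne hle (Ne.symm hdiff)
    · intro hlt
      rcases hξ.lt_or_gt with h|h
      · exact h
      · exfalso
        have h' := hanti hmem₂ hmem₁ h
        have hle := real_sign_mono h'.le
        rw [← hσ₁ k, ← hσ₂ k] at hle
        linarith
end
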